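/- Let ((Δ_i)_{0≤i≤n}, (ψ_i)_{0≤i≤n}) be a deformation of order n of a Coder pair (C, ψ_C), with obstruction Ob_C = Σ_{i+j=n+1, i,j>0} ((Δ_i ⊗ Id_C) ∘ Δ_j − (Id_C ⊗ Δ_i) ∘ Δ_j) and Ob_ψ = Σ_{i+j=n+1, i,j>0} (Δ_i ∘ ψ_j − (Id_C ⊗ ψ_i) ∘ Δ_j − (ψ_i ⊗ Id_C) ∘ Δ_j). Then the deformation is extensible to a deformation of order n+1 (i.e. there exist Δ_{n+1} ∈ Hom_k(C, C⊗C) and ψ_{n+1} ∈ Hom_k(C, C) so that the extended families satisfy the deformation equations for all 0 ≤ k ≤ n+1) if and only if (Ob_C, Ob_ψ) is a coboundary, i.e. there exist f ∈ Hom_k(C, C⊗C) and g ∈ Hom_k(C, C) with Ob_C = δ_c(f) and Ob_ψ = δ_c(g) + ω(f). -/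

import Mathlib

open TensorProduct LinearMap

variable {k C : Type} [Field k] [AddCommGroup C] [Module k C]

/-- `δ_c(g) = (Id_C ⊗ g) ∘ Δ − Δ ∘ g + (g ⊗ Id_C) ∘ Δ` for `g ∈ Hom(C, C)`
(coadjoint coefficients). -/
noncomputable def delta1 (Δ : C →ₗ[k] C ⊗[k] C) (g : C →ₗ[k] C) : C →ₗ[k] C ⊗[k] C :=
  LinearMap.lTensor C g ∘ₗ Δ - Δ ∘ₗ g + LinearMap.rTensor C g ∘ₗ Δ

/-- `δ_c(f) = (Id_C ⊗ f) ∘ Δ − (Δ ⊗ Id_C) ∘ f + (Id_C ⊗ Δ) ∘ f − (f ⊗ Id_C) ∘ Δ`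
for `f ∈ Hom(C, C ⊗ C)` (coadjoint coefficients). -/
noncomputable def delta2 (Δ : C →ₗ[k] C ⊗[k] C) (f : C →ₗ[k] C ⊗[k] C) :
    C →ₗ[k] C ⊗[k] (C ⊗[k] C) :=
  LinearMap.lTensor C f ∘ₗ Δ
    - (TensorProduct.assoc k C C C).toLinearMap ∘ₗ LinearMap.rTensor C Δ ∘ₗ f
    + LinearMap.lTensor C Δ ∘ₗ f
    - (TensorProduct.assoc k C C C).toLinearMap ∘ₗ LinearMap.rTensor C f ∘ₗ Δ

/-- `ω(g) = ψ_C ∘ g − g ∘ ψ_C` for `g ∈ Hom(C, C)`. -/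
noncomputable def omega1 (ψC : C →ₗ[k] C) (g : C →ₗ[k] C) : C →ₗ[k] C :=
  ψC ∘ₗ g - g ∘ₗ ψC

/-- `ω(f) = (ψ_C ⊗ Id_C) ∘ f + (Id_C ⊗ ψ_C) ∘ f − f ∘ ψ_C` for `f ∈ Hom(C, C ⊗ C)`. -/
noncomputable def omega2 (ψC : C →ₗ[k] C) (f : C →ₗ[k] C ⊗[k] C) : C →ₗ[k] C ⊗[k] C :=
  LinearMap.rTensor C ψC ∘ₗ f + LinearMap.lTensor C ψC ∘ₗ f - f ∘ₗ ψC

/-- A 1-parameter formal deformation `(Δ_t = Σ Δ_i t^i, ψ_t = Σ ψ_i t^i)` of a Coder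
pair `(C, ψ_C)`: `Δ_0 = Δ`, `ψ_0 = ψ_C`, and for every `k ≥ 0`,
`Σ_{i+j=k} ((Id_C ⊗ Δ_i) ∘ Δ_j − (Δ_i ⊗ Id_C) ∘ Δ_j) = 0` and
`Σ_{i+j=k} (Δ_i ∘ ψ_j − (ψ_i ⊗ Id_C) ∘ Δ_j − (Id_C ⊗ ψ_i) ∘ Δ_j) = 0`. -/
noncomputable def IsFormalDeformation (Δ : C →ₗ[k] C ⊗[k] C) (ψC : C →ₗ[k] C)
    (Δs : ℕ → (C →ₗ[k] C ⊗[k] C)) (ψs : ℕ → (C →ₗ[k] C)) : Prop :=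
  Δs 0 = Δ ∧ ψs 0 = ψC ∧
  (∀ n : ℕ, ∑ p ∈ Finset.HasAntidiagonal.antidiagonal n, LinearMap.lTensor C (Δs p.1) ∘ₗ Δs p.2
      = ∑ p ∈ Finset.HasAntidiagonal.antidiagonal n,
          (TensorProduct.assoc k C C C).toLinearMap ∘ₗ LinearMap.rTensor C (Δs p.1) ∘ₗ Δs p.2) ∧
  (∀ n : ℕ, ∑ p ∈ Finset.HasAntidiagonal.antidiagonal n, Δs p.1 ∘ₗ ψs p.2
      = ∑ p ∈ Finset.HasAntidiagonal.antidiagonal n,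
          (LinearMap.rTensor C (ψs p.1) ∘ₗ Δs p.2 + LinearMap.lTensor C (ψs p.1) ∘ₗ Δs p.2))

/-- The additive group of 4-cochains `Hom(C, C^{⊗4})`.  (Registered explicitly since
instance search struggles with the deeply nested tensor product.) -/
noncomputable instance instAddCommGroupHom4 :
    AddCommGroup (C →ₗ[k] C ⊗[k] (C ⊗[k] (C ⊗[k] C))) :=
  @LinearMap.addCommGroup k k C (C ⊗[k] (C ⊗[k] (C ⊗[k] C))) _ _ _
    (TensorProduct.addCommGroup) _ _ (RingHom.id k)

/-- `δ_c(F)` for a 3-cochain `F ∈ Hom(C, C ⊗ C ⊗ C)` (coadjoint coefficients):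
`δ_c(F) = (Id ⊗ F) ∘ Δ − (Δ ⊗ Id ⊗ Id) ∘ F + (Id ⊗ Δ ⊗ Id) ∘ F − (Id ⊗ Id ⊗ Δ) ∘ F
          + (F ⊗ Id) ∘ Δ`. -/
noncomputable def delta3 (Δ : C →ₗ[k] C ⊗[k] C) (F : C →ₗ[k] C ⊗[k] (C ⊗[k] C)) :
    C →ₗ[k] C ⊗[k] (C ⊗[k] (C ⊗[k] C)) :=
  LinearMap.lTensor C F ∘ₗ Δ
    - (TensorProduct.assoc k C C (C ⊗[k] C)).toLinearMap
        ∘ₗ LinearMap.rTensor (C ⊗[k] C) Δ ∘ₗ F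
    + LinearMap.lTensor C
        ((TensorProduct.assoc k C C C).toLinearMap ∘ₗ LinearMap.rTensor C Δ) ∘ₗ F
    - LinearMap.lTensor C (LinearMap.lTensor C Δ) ∘ₗ F
    + (LinearMap.lTensor C (TensorProduct.assoc k C C C).toLinearMap
        ∘ₗ (TensorProduct.assoc k C (C ⊗[k] C) C).toLinearMap)
        ∘ₗ LinearMap.rTensor C F ∘ₗ Δ

/-- `ω(F) = (ψ ⊗ Id ⊗ Id) ∘ F + (Id ⊗ ψ ⊗ Id) ∘ F + (Id ⊗ Id ⊗ ψ) ∘ F − F ∘ ψ` for a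
3-cochain `F ∈ Hom(C, C ⊗ C ⊗ C)`. -/
noncomputable def omega3 (ψC : C →ₗ[k] C) (F : C →ₗ[k] C ⊗[k] (C ⊗[k] C)) :
    C →ₗ[k] C ⊗[k] (C ⊗[k] C) :=
  LinearMap.rTensor (C ⊗[k] C) ψC ∘ₗ F
    + LinearMap.lTensor C (LinearMap.rTensor C ψC) ∘ₗ F
    + LinearMap.lTensor C (LinearMap.lTensor C ψC) ∘ₗ F
    - F ∘ₗ ψC

/-- A deformation of order `n` of a Coder pair `(C, ψ_C)`: `Δ_0 = Δ`, `ψ_0 = ψ_C`, and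
the deformation equations hold modulo `t^{n+1}`, i.e. for every `0 ≤ m ≤ n`. -/
noncomputable def IsDeformationOfOrder (n : ℕ) (Δ : C →ₗ[k] C ⊗[k] C) (ψC : C →ₗ[k] C)
    (Δs : ℕ → (C →ₗ[k] C ⊗[k] C)) (ψs : ℕ → (C →ₗ[k] C)) : Prop :=
  Δs 0 = Δ ∧ ψs 0 = ψC ∧
  (∀ m : ℕ, m ≤ n →
    ∑ p ∈ Finset.HasAntidiagonal.antidiagonal m, LinearMap.lTensor C (Δs p.1) ∘ₗ Δs p.2
      = ∑ p ∈ Finset.HasAntidiagonal.antidiagonal m,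
          (TensorProduct.assoc k C C C).toLinearMap ∘ₗ LinearMap.rTensor C (Δs p.1) ∘ₗ Δs p.2) ∧
  (∀ m : ℕ, m ≤ n →
    ∑ p ∈ Finset.HasAntidiagonal.antidiagonal m, Δs p.1 ∘ₗ ψs p.2
      = ∑ p ∈ Finset.HasAntidiagonal.antidiagonal m,
          (LinearMap.rTensor C (ψs p.1) ∘ₗ Δs p.2 + LinearMap.lTensor C (ψs p.1) ∘ₗ Δs p.2))

/-- The first obstruction component
`Ob_C = Σ_{i+j=n+1, i,j>0} ((Δ_i ⊗ Id_C) ∘ Δ_j − (Id_C ⊗ Δ_i) ∘ Δ_j)`. -/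
noncomputable def obC (n : ℕ) (Δs : ℕ → (C →ₗ[k] C ⊗[k] C)) :
    C →ₗ[k] C ⊗[k] (C ⊗[k] C) :=
  ∑ p ∈ (Finset.HasAntidiagonal.antidiagonal (n + 1)).filter (fun p => 0 < p.1 ∧ 0 < p.2),
    ((TensorProduct.assoc k C C C).toLinearMap ∘ₗ LinearMap.rTensor C (Δs p.1) ∘ₗ Δs p.2
      - LinearMap.lTensor C (Δs p.1) ∘ₗ Δs p.2)

/-- The second obstruction component
`Ob_ψ = Σ_{i+j=n+1, i,j>0} (Δ_i ∘ ψ_j − (Id_C ⊗ ψ_i) ∘ Δ_j − (ψ_i ⊗ Id_C) ∘ Δ_j)`. -/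
noncomputable def obPsi (n : ℕ) (Δs : ℕ → (C →ₗ[k] C ⊗[k] C)) (ψs : ℕ → (C →ₗ[k] C)) :
    C →ₗ[k] C ⊗[k] C :=
  ∑ p ∈ (Finset.HasAntidiagonal.antidiagonal (n + 1)).filter (fun p => 0 < p.1 ∧ 0 < p.2),
    (Δs p.1 ∘ₗ ψs p.2 - LinearMap.lTensor C (ψs p.1) ∘ₗ Δs p.2
      - LinearMap.rTensor C (ψs p.1) ∘ₗ Δs p.2)

/-!
Splitting the boundary terms `(0, n + 1)` and `(n + 1, 0)` off the degree-`(n + 1)`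
deformation equations leaves `δ_c(Δ_{n+1})`, resp. `δ_c(ψ_{n+1}) + ω(Δ_{n+1})`, on one side
and the obstruction on the other, while the equations of degree `≤ n` do not involve
`Δ_{n+1}, ψ_{n+1}`. So an extension is the same thing as a pair `(f, g) = (Δ_{n+1}, ψ_{n+1})`
whose coboundary is the obstruction.
-/

open Finset

theorem sum_antidiagonal_succ_eq_add_sum_interior {M : Type*} [AddCommMonoid M] (n : ℕ)
    (f : ℕ × ℕ → M) :
    ∑ p ∈ antidiagonal (n + 1), f p
      = f (0, n + 1) + f (n + 1, 0)
        + ∑ p ∈ (antidiagonal (n + 1)).filter (fun p => 0 < p.1 ∧ 0 < p.2), f p := by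
  have hboundary : (antidiagonal (n + 1)).filter (fun p => ¬(0 < p.1 ∧ 0 < p.2))
      = {(0, n + 1), (n + 1, 0)} := by
    ext ⟨a, b⟩
    simp only [mem_filter, HasAntidiagonal.mem_antidiagonal, mem_insert, mem_singleton,
      Prod.mk.injEq]
    omega
  rw [← sum_filter_add_sum_filter_not _ (fun p => 0 < p.1 ∧ 0 < p.2), hboundary,
    sum_pair (by simp), add_comm]

theorem le_of_mem_interior_antidiagonal {n : ℕ} {p : ℕ × ℕ}
    (hp : p ∈ (antidiagonal (n + 1)).filter (fun p => 0 < p.1 ∧ 0 < p.2)) :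
    p.1 ≤ n ∧ p.2 ≤ n := by
  rw [mem_filter, HasAntidiagonal.mem_antidiagonal] at hp
  omega

theorem obC_congr {n : ℕ} {Δs Δs' : ℕ → (C →ₗ[k] C ⊗[k] C)} (h : ∀ i ≤ n, Δs' i = Δs i) :
    obC n Δs' = obC n Δs :=
  sum_congr rfl fun _ hp => by
    obtain ⟨h₁, h₂⟩ := le_of_mem_interior_antidiagonal hp
    rw [h _ h₁, h _ h₂]

theorem obPsi_congr {n : ℕ} {Δs Δs' : ℕ → (C →ₗ[k] C ⊗[k] C)} {ψs ψs' : ℕ → (C →ₗ[k] C)}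
    (hΔ : ∀ i ≤ n, Δs' i = Δs i) (hψ : ∀ i ≤ n, ψs' i = ψs i) :
    obPsi n Δs' ψs' = obPsi n Δs ψs :=
  sum_congr rfl fun _ hp => by
    obtain ⟨h₁, h₂⟩ := le_of_mem_interior_antidiagonal hp
    rw [hΔ _ h₁, hΔ _ h₂, hψ _ h₁, hψ _ h₂]

theorem coassoc_succ_iff_obC_eq_delta2 {n : ℕ} {Δ : C →ₗ[k] C ⊗[k] C}
    {Δs : ℕ → (C →ₗ[k] C ⊗[k] C)} (h0 : Δs 0 = Δ) :
    (∑ p ∈ antidiagonal (n + 1), LinearMap.lTensor C (Δs p.1) ∘ₗ Δs p.2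
      = ∑ p ∈ antidiagonal (n + 1),
          (TensorProduct.assoc k C C C).toLinearMap ∘ₗ LinearMap.rTensor C (Δs p.1) ∘ₗ Δs p.2)
      ↔ obC n Δs = delta2 Δ (Δs (n + 1)) := by
  subst h0
  rw [sum_antidiagonal_succ_eq_add_sum_interior, sum_antidiagonal_succ_eq_add_sum_interior, obC,
    sum_sub_distrib, eq_comm (a := _ - _)]
  apply eq_iff_eq_of_sub_eq_sub
  rw [delta2]
  abel

theorem coder_succ_iff_obPsi_eq_delta1_add_omega2 {n : ℕ} {Δ : C →ₗ[k] C ⊗[k] C} {ψC : C →ₗ[k] C}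
    {Δs : ℕ → (C →ₗ[k] C ⊗[k] C)} {ψs : ℕ → (C →ₗ[k] C)} (hΔ0 : Δs 0 = Δ) (hψ0 : ψs 0 = ψC) :
    (∑ p ∈ antidiagonal (n + 1), Δs p.1 ∘ₗ ψs p.2
      = ∑ p ∈ antidiagonal (n + 1),
          (LinearMap.rTensor C (ψs p.1) ∘ₗ Δs p.2 + LinearMap.lTensor C (ψs p.1) ∘ₗ Δs p.2))
      ↔ obPsi n Δs ψs = delta1 Δ (ψs (n + 1)) + omega2 ψC (Δs (n + 1)) := by
  subst hΔ0 hψ0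
  rw [sum_antidiagonal_succ_eq_add_sum_interior, sum_antidiagonal_succ_eq_add_sum_interior, obPsi,
    sum_sub_distrib, sum_sub_distrib, sum_add_distrib]
  apply eq_iff_eq_of_sub_eq_sub
  rw [delta1, omega2]
  abel

theorem isDeformationOfOrder_congr {n : ℕ} {Δ : C →ₗ[k] C ⊗[k] C} {ψC : C →ₗ[k] C}
    {Δs Δs' : ℕ → (C →ₗ[k] C ⊗[k] C)} {ψs ψs' : ℕ → (C →ₗ[k] C)}
    (hΔ : ∀ i ≤ n, Δs' i = Δs i) (hψ : ∀ i ≤ n, ψs' i = ψs i) :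
    IsDeformationOfOrder n Δ ψC Δs' ψs' ↔ IsDeformationOfOrder n Δ ψC Δs ψs := by
  refine and_congr (by rw [hΔ 0 n.zero_le]) (and_congr (by rw [hψ 0 n.zero_le])
    (and_congr (forall₂_congr fun m hm => ?_) (forall₂_congr fun m hm => ?_)))
  all_goals
    have agree (p) (hp : p ∈ antidiagonal m) :
        Δs' p.1 = Δs p.1 ∧ Δs' p.2 = Δs p.2 ∧ ψs' p.1 = ψs p.1 ∧ ψs' p.2 = ψs p.2 := by
      have h₁ := (HasAntidiagonal.antidiagonal.fst_le hp).trans hm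
      have h₂ := (HasAntidiagonal.antidiagonal.snd_le hp).trans hm
      exact ⟨hΔ _ h₁, hΔ _ h₂, hψ _ h₁, hψ _ h₂⟩
    apply Eq.congr <;> refine sum_congr rfl fun p hp => ?_ <;>
      simp only [(agree p hp).1, (agree p hp).2.1, (agree p hp).2.2.1, (agree p hp).2.2.2]

theorem isDeformationOfOrder_succ_iff {n : ℕ} {Δ : C →ₗ[k] C ⊗[k] C} {ψC : C →ₗ[k] C}
    {Δs : ℕ → (C →ₗ[k] C ⊗[k] C)} {ψs : ℕ → (C →ₗ[k] C)} :
    IsDeformationOfOrder (n + 1) Δ ψC Δs ψs ↔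
      IsDeformationOfOrder n Δ ψC Δs ψs ∧ obC n Δs = delta2 Δ (Δs (n + 1)) ∧
        obPsi n Δs ψs = delta1 Δ (ψs (n + 1)) + omega2 ψC (Δs (n + 1)) := by
  constructor
  · rintro ⟨h0, h1, hcoassoc, hcoder⟩
    exact ⟨⟨h0, h1, fun m hm => hcoassoc m (hm.trans n.le_succ),
        fun m hm => hcoder m (hm.trans n.le_succ)⟩,
      (coassoc_succ_iff_obC_eq_delta2 h0).1 (hcoassoc _ le_rfl),
      (coder_succ_iff_obPsi_eq_delta1_add_omega2 h0 h1).1 (hcoder _ le_rfl)⟩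
  · rintro ⟨⟨h0, h1, hcoassoc, hcoder⟩, hobC, hobPsi⟩
    refine ⟨h0, h1, fun m hm => ?_, fun m hm => ?_⟩ <;> rcases Nat.le_succ_iff.1 hm with hm | rfl
    · exact hcoassoc m hm
    · exact (coassoc_succ_iff_obC_eq_delta2 h0).2 hobC
    · exact hcoder m hm
    · exact (coder_succ_iff_obPsi_eq_delta1_add_omega2 h0 h1).2 hobPsi

theorem extensible_iff_obstruction_coboundary_general
    (Δ : C →ₗ[k] C ⊗[k] C)
    (ψC : C →ₗ[k] C)
    (n : ℕ) (Δs : ℕ → (C →ₗ[k] C ⊗[k] C)) (ψs : ℕ → (C →ₗ[k] C))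
    (hdef : IsDeformationOfOrder n Δ ψC Δs ψs) :
    (∃ (Δs' : ℕ → (C →ₗ[k] C ⊗[k] C)) (ψs' : ℕ → (C →ₗ[k] C)),
        (∀ i : ℕ, i ≤ n → Δs' i = Δs i) ∧ (∀ i : ℕ, i ≤ n → ψs' i = ψs i) ∧
        IsDeformationOfOrder (n + 1) Δ ψC Δs' ψs')
      ↔ (∃ (f : C →ₗ[k] C ⊗[k] C) (g : C →ₗ[k] C),
          obC n Δs = delta2 Δ f ∧ obPsi n Δs ψs = delta1 Δ g + omega2 ψC f) := by
  constructor
  · rintro ⟨Δs', ψs', hΔ, hψ, hext⟩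
    obtain ⟨-, hobC, hobPsi⟩ := isDeformationOfOrder_succ_iff.1 hext
    exact ⟨Δs' (n + 1), ψs' (n + 1), (obC_congr hΔ).symm.trans hobC,
      (obPsi_congr hΔ hψ).symm.trans hobPsi⟩
  · rintro ⟨f, g, hobC, hobPsi⟩
    have hΔ : ∀ i ≤ n, Function.update Δs (n + 1) f i = Δs i :=
      fun i hi => Function.update_of_ne (by omega) _ _
    have hψ : ∀ i ≤ n, Function.update ψs (n + 1) g i = ψs i :=
      fun i hi => Function.update_of_ne (by omega) _ _
    refine ⟨_, _, hΔ, hψ, isDeformationOfOrder_succ_iff.2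
      ⟨(isDeformationOfOrder_congr hΔ hψ).2 hdef, ?_, ?_⟩⟩
    · rwa [obC_congr hΔ, Function.update_self]
    · rwa [obPsi_congr hΔ hψ, Function.update_self, Function.update_self]

/-- A deformation of order `n` of a Coder pair `(C, ψ_C)` extends to a deformation of
order `n + 1` (keeping terms of degree `≤ n`) if and only if its obstruction
`(Ob_C, Ob_ψ)` is a coboundary: `Ob_C = δ_c(f)` and `Ob_ψ = δ_c(g) + ω(f)` for some
2-cochain `(f, g)`. -/
theorem extensible_iff_obstruction_coboundary [CharZero k]
    (Δ : C →ₗ[k] C ⊗[k] C)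
    (hΔ : (TensorProduct.assoc k C C C).toLinearMap ∘ₗ LinearMap.rTensor C Δ ∘ₗ Δ
        = LinearMap.lTensor C Δ ∘ₗ Δ)
    (ψC : C →ₗ[k] C)
    (hψC : Δ ∘ₗ ψC = LinearMap.rTensor C ψC ∘ₗ Δ + LinearMap.lTensor C ψC ∘ₗ Δ)
    (n : ℕ) (Δs : ℕ → (C →ₗ[k] C ⊗[k] C)) (ψs : ℕ → (C →ₗ[k] C))
    (hdef : IsDeformationOfOrder n Δ ψC Δs ψs) :
    (∃ (Δs' : ℕ → (C →ₗ[k] C ⊗[k] C)) (ψs' : ℕ → (C →ₗ[k] C)),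
        (∀ i : ℕ, i ≤ n → Δs' i = Δs i) ∧ (∀ i : ℕ, i ≤ n → ψs' i = ψs i) ∧
        IsDeformationOfOrder (n + 1) Δ ψC Δs' ψs')
      ↔ (∃ (f : C →ₗ[k] C ⊗[k] C) (g : C →ₗ[k] C),
          obC n Δs = delta2 Δ f ∧ obPsi n Δs ψs = delta1 Δ g + omega2 ψC f) :=
  extensible_iff_obstruction_coboundary_general Δ ψC n Δs ψs hdef
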